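/- arXiv:2412.17380 — 2 statements merged into one kernel-verified Lean document; each statement's English description precedes it below -/
import Mathlib

section
/- Let H be a Hilbert space, ℳ : H → H a nonnegative self-adjoint bounded operator, β > 0, ε > 0, α ∈ (0,1], N ∈ ℕ, and P_N an orthogonal projection on H. Suppose that inf{⟨ℳξ, ξ⟩ : ‖ξ‖ = 1, ‖P_N ξ‖ ≥ α} ≥ ε. Then for every φ ∈ H, β ‖P_N (βI + ℳ)^{-1} φ‖ ≤ (max(α, sqrt(β/ε))) ‖φ‖. -/
/-!
Put `x = (β + ℳ)⁻¹ φ`. Then `⟪φ, x⟫ = β ‖x‖² + ⟪ℳ x, x⟫ ≤ ‖φ‖ ‖x‖` with both summands nonnegative,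
so `β ‖x‖ ≤ ‖φ‖` and `⟪ℳ x, x⟫ ≤ ‖φ‖ ‖x‖`. If `‖P x‖ < α ‖x‖`, then `β ‖P x‖ ≤ α ‖φ‖`. Otherwise
`x / ‖x‖` lies in the region where `ℳ` is coercive, so `ε ‖x‖ ≤ ‖φ‖` as well, and the geometric
mean gives `β ‖x‖ = √(β/ε) √(β ‖x‖ · ε ‖x‖) ≤ √(β/ε) ‖φ‖`.
-/

lemma mul_le_of_mul_sq_le {a b t : ℝ} (hb : 0 ≤ b) (ht : 0 ≤ t) (h : a * t ^ 2 ≤ b * t) :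
    a * t ≤ b := by
  rcases ht.eq_or_lt with rfl | ht
  · simpa using hb
  · exact le_of_mul_le_mul_right (by nlinarith) ht

lemma mul_le_sqrt_div_mul {β ε t c : ℝ} (hβ : 0 ≤ β) (hε : 0 < ε) (ht : 0 ≤ t)
    (hβt : β * t ≤ c) (hεt : ε * t ≤ c) : β * t ≤ √(β / ε) * c := by
  have hc : 0 ≤ c := (mul_nonneg hε.le ht).trans hεt
  calc β * t = √(β / ε * ((β * t) * (ε * t))) := by
        rw [show β / ε * ((β * t) * (ε * t)) = (β * t) * (β * t) by field_simp,
          Real.sqrt_mul_self (mul_nonneg hβ ht)]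
    _ ≤ √(β / ε * (c * c)) := by gcongr
    _ = √(β / ε) * c := by rw [Real.sqrt_mul (by positivity), Real.sqrt_mul_self hc]

section

variable {H : Type*} [NormedAddCommGroup H] [InnerProductSpace ℝ H]

lemma norm_apply_le_of_isStarProjection [CompleteSpace H] {P : H →L[ℝ] H}
    (hP : IsStarProjection P) (x : H) : ‖P x‖ ≤ ‖x‖ := by
  simpa using P.le_of_opNorm_le (IsStarProjection.norm_le P hP) x

lemma real_inner_smul_add_apply_self (T : H →L[ℝ] H) (β : ℝ) (x : H) :
    inner ℝ (β • x + T x) x = β * ‖x‖ ^ 2 + inner ℝ (T x) x := by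
  rw [inner_add_left, real_inner_smul_left, real_inner_self_eq_norm_sq]

lemma real_inner_apply_self_le_norm_smul_add_mul (T : H →L[ℝ] H) {β : ℝ} (hβ : 0 ≤ β)
    (x : H) : inner ℝ (T x) x ≤ ‖β • x + T x‖ * ‖x‖ :=
  calc inner ℝ (T x) x ≤ inner ℝ (β • x + T x) x := by
        rw [real_inner_smul_add_apply_self]; nlinarith [sq_nonneg ‖x‖]
    _ ≤ ‖β • x + T x‖ * ‖x‖ := real_inner_le_norm _ _

lemma ContinuousLinearMap.IsPositive.mul_norm_le_norm_smul_add {T : H →L[ℝ] H}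
    (hT : T.IsPositive) (β : ℝ) (x : H) : β * ‖x‖ ≤ ‖β • x + T x‖ := by
  refine mul_le_of_mul_sq_le (norm_nonneg _) (norm_nonneg x) ?_
  calc β * ‖x‖ ^ 2 ≤ inner ℝ (β • x + T x) x := by
        rw [real_inner_smul_add_apply_self]; linarith [hT.inner_nonneg_left x]
    _ ≤ ‖β • x + T x‖ * ‖x‖ := real_inner_le_norm _ _

lemma mul_norm_sq_le_inner_apply_self {M P : H →L[ℝ] H} {α ε : ℝ}
    (hlow : ∀ ξ : H, ‖ξ‖ = 1 → α ≤ ‖P ξ‖ → ε ≤ inner ℝ (M ξ) ξ) {x : H}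
    (hx : α * ‖x‖ ≤ ‖P x‖) : ε * ‖x‖ ^ 2 ≤ inner ℝ (M x) x := by
  rcases eq_or_ne x 0 with rfl | hx0
  · simp
  have hxn : 0 < ‖x‖ := norm_pos_iff.mpr hx0
  have hunit : ‖‖x‖⁻¹ • x‖ = 1 := by rw [norm_smul, norm_inv, norm_norm, inv_mul_cancel₀ hxn.ne']
  have hPunit : α ≤ ‖P (‖x‖⁻¹ • x)‖ := by
    rw [map_smul, norm_smul, norm_inv, norm_norm, le_inv_mul_iff₀ hxn, mul_comm]
    exact hx
  have h := hlow _ hunit hPunit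
  rw [map_smul, real_inner_smul_left, real_inner_smul_right, le_inv_mul_iff₀ hxn,
    le_inv_mul_iff₀ hxn] at h
  linarith

end

theorem regularized_inverse_bound_general
    {H : Type*} [NormedAddCommGroup H] [InnerProductSpace ℝ H] [CompleteSpace H]
    (ℳ : H →L[ℝ] H) (hℳ : ℳ.IsPositive)
    (P : H →L[ℝ] H) (hP_proj : P.comp P = P) (hP_sa : IsSelfAdjoint P)
    (β ε α : ℝ) (hβ : 0 < β) (hε : 0 < ε) (hα0 : 0 < α)
    (hlow : ∀ ξ : H, ‖ξ‖ = 1 → α ≤ ‖P ξ‖ → ε ≤ (inner ℝ (ℳ ξ) ξ : ℝ))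
    (R : H →L[ℝ] H)
    (hR : (β • ContinuousLinearMap.id ℝ H + ℳ).comp R = ContinuousLinearMap.id ℝ H) :
    ∀ φ : H, β * ‖P (R φ)‖ ≤ max α (Real.sqrt (β / ε)) * ‖φ‖ := by
  intro φ
  have hφ : β • R φ + ℳ (R φ) = φ := by simpa using congr($hR φ)
  set x := R φ
  have hβx : β * ‖x‖ ≤ ‖φ‖ := hφ ▸ hℳ.mul_norm_le_norm_smul_add β x
  by_cases hc : α * ‖x‖ ≤ ‖P x‖
  · have hεx : ε * ‖x‖ ≤ ‖φ‖ := mul_le_of_mul_sq_le (norm_nonneg φ) (norm_nonneg x)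
      ((mul_norm_sq_le_inner_apply_self hlow hc).trans
        (hφ ▸ real_inner_apply_self_le_norm_smul_add_mul ℳ hβ.le x))
    calc β * ‖P x‖ ≤ β * ‖x‖ := by
          gcongr; exact norm_apply_le_of_isStarProjection ⟨hP_proj, hP_sa⟩ x
      _ ≤ √(β / ε) * ‖φ‖ := mul_le_sqrt_div_mul hβ.le hε (norm_nonneg x) hβx hεx
      _ ≤ max α √(β / ε) * ‖φ‖ := by gcongr; exact le_max_right _ _
  · calc β * ‖P x‖ ≤ β * (α * ‖x‖) := by gcongr; exact (not_le.mp hc).le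
      _ = α * (β * ‖x‖) := by ring
      _ ≤ α * ‖φ‖ := by gcongr
      _ ≤ max α √(β / ε) * ‖φ‖ := by gcongr; exact le_max_left _ _

/-- Regularized-inverse bound (Lemma 5.14 of Hairer–Mattingly 2011): if `ℳ` is a
nonnegative self-adjoint operator, `P` an orthogonal projection, and
`⟨ℳξ,ξ⟩ ≥ ε` for all unit `ξ` with `‖Pξ‖ ≥ α`, then for every `φ`,
`β ‖P (βI + ℳ)⁻¹ φ‖ ≤ max(α, √(β/ε)) ‖φ‖`. -/
theorem regularized_inverse_bound
    {H : Type*} [NormedAddCommGroup H] [InnerProductSpace ℝ H] [CompleteSpace H]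
    (ℳ : H →L[ℝ] H) (hℳ : ℳ.IsPositive)
    (P : H →L[ℝ] H) (hP_proj : P.comp P = P) (hP_sa : IsSelfAdjoint P)
    (β ε α : ℝ) (hβ : 0 < β) (hε : 0 < ε) (hα0 : 0 < α) (hα1 : α ≤ 1)
    (hlow : ∀ ξ : H, ‖ξ‖ = 1 → α ≤ ‖P ξ‖ → ε ≤ (inner ℝ (ℳ ξ) ξ : ℝ))
    (R : H →L[ℝ] H)
    (hR : (β • ContinuousLinearMap.id ℝ H + ℳ).comp R = ContinuousLinearMap.id ℝ H)
    (hR' : R.comp (β • ContinuousLinearMap.id ℝ H + ℳ) = ContinuousLinearMap.id ℝ H) :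
    ∀ φ : H, β * ‖P (R φ)‖ ≤ max α (Real.sqrt (β / ε)) * ‖φ‖ :=
  regularized_inverse_bound_general ℳ hℳ P hP_proj hP_sa β ε α hβ hε hα0 hlow R hR
end

section
/- Let Z₀ ⊂ ℤ² \ {(0,0)} be a finite symmetric set (Z₀ = −Z₀) that generates ℤ² as a group and contains two non-parallel vectors m, n with |m| ≠ |n|. Define recursively Z_n = { k + j : j ∈ Z₀, k ∈ Z_{n−1}, ⟨k^⊥, j⟩ ≠ 0, |k| ≠ |j| } where k^⊥ = (k₂, −k₁). Then ∪_{n≥1} Z_n = ℤ² \ {(0,0)}. -/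
/-!
Let `R = ⋃ N, Z N`: it contains `Z₀` and is closed under admissible steps, so it suffices to
show that every `p ≠ 0` is one admissible step away from `R`.

Let `L` be the lattice spanned by `m` and `n`. Walking from `m` along `±n`, away from the origin,
gives points of `R` of arbitrarily large norm in `L`; one or two steps from such a far point carry
this property from a coset `c + L` to `j + c + L`, so, `Z₀` being a symmetric generator, every coset
of `L` contains far points of `R`. From a far `q ≡ p (mod L)` one reaches `p = q + a u + b w`
(`{u, w} = {m, n}`) by four straight walks: along `±u` in the direction where norms grow, then
along `w` and back along `u`, which are always admissible because `|⟨k^⊥, v⟩| > |v|²` forces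
`|k| > |v|` and `⟨k^⊥, v⟩` is constant along `v`; and finally along `w` into `p` from the side
where `⟨p, w⟩ ≥ 0`, so that the norms stay above `|w|²`. A point of `ℤ m` or `ℤ n` is one step
`±n` or `±m` away from a point off both lines.
-/

namespace LatticePropagation

/-- `cross k j = ⟨k^⊥, j⟩` with `k^⊥ = (k₂, -k₁)`. -/
def cross (k j : ℤ × ℤ) : ℤ := k.2 * j.1 - k.1 * j.2

def dot (k j : ℤ × ℤ) : ℤ := k.1 * j.1 + k.2 * j.2

def normSq (k : ℤ × ℤ) : ℤ := k.1 ^ 2 + k.2 ^ 2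

section Algebra

variable (x y z : ℤ × ℤ) (a : ℤ)

theorem cross_self : cross x x = 0 := by
  simp only [cross]; ring

theorem cross_comm : cross x y = -cross y x := by
  simp only [cross]; ring

theorem cross_add_left : cross (x + y) z = cross x z + cross y z := by
  simp only [cross, Prod.fst_add, Prod.snd_add]; ring

theorem cross_sub_left : cross (x - y) z = cross x z - cross y z := by
  simp only [cross, Prod.fst_sub, Prod.snd_sub]; ring

theorem cross_neg_left : cross (-x) y = -cross x y := by
  simp only [cross, Prod.fst_neg, Prod.snd_neg]; ring

theorem cross_neg_right : cross x (-y) = -cross x y := by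
  simp only [cross, Prod.fst_neg, Prod.snd_neg]; ring

theorem cross_add_smul_self : cross (x + a • y) y = cross x y := by
  simp only [cross, Prod.fst_add, Prod.snd_add, Prod.smul_fst, Prod.smul_snd, smul_eq_mul]; ring

theorem cross_add_smul_left : cross (x + a • y) z = cross x z + a * cross y z := by
  simp only [cross, Prod.fst_add, Prod.snd_add, Prod.smul_fst, Prod.smul_snd, smul_eq_mul]; ring

theorem dot_neg_right : dot x (-y) = -dot x y := by
  simp only [dot, Prod.fst_neg, Prod.snd_neg]; ring

theorem normSq_neg : normSq (-x) = normSq x := by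
  simp only [normSq, Prod.fst_neg, Prod.snd_neg]; ring

theorem normSq_zero : normSq 0 = 0 := rfl

theorem normSq_nonneg : 0 ≤ normSq x := by
  simp only [normSq]; positivity

theorem normSq_pos {x : ℤ × ℤ} (hx : x ≠ 0) : 0 < normSq x := by
  obtain h | h : x.1 ≠ 0 ∨ x.2 ≠ 0 := by
    contrapose! hx; exact Prod.ext hx.1 hx.2
  all_goals simp only [normSq]; positivity

theorem normSq_add_smul : normSq (x + a • y) = normSq x + 2 * a * dot x y + a ^ 2 * normSq y := by
  simp only [normSq, dot, Prod.fst_add, Prod.snd_add, Prod.smul_fst, Prod.smul_snd, smul_eq_mul]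
  ring

theorem normSq_add_le : normSq (x + y) ≤ 2 * normSq x + 2 * normSq y := by
  simp only [normSq, Prod.fst_add, Prod.snd_add]
  nlinarith [sq_nonneg (x.1 - y.1), sq_nonneg (x.2 - y.2)]

theorem normSq_add_add_normSq_sub :
    normSq (x + y) + normSq (x - y) = 2 * normSq x + 2 * normSq y := by
  simp only [normSq, Prod.fst_add, Prod.snd_add, Prod.fst_sub, Prod.snd_sub]; ring

theorem dot_sq_add_cross_sq : dot x y ^ 2 + cross x y ^ 2 = normSq x * normSq y := by
  simp only [dot, cross, normSq]; ring

theorem cross_smul_eq_sub : cross x y • z = cross x z • y - cross y z • x := by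
  ext <;> simp only [cross, Prod.smul_fst, Prod.smul_snd, Prod.fst_sub, Prod.snd_sub,
    smul_eq_mul] <;> ring

end Algebra

section Geometry

variable {k m n q v w j : ℤ × ℤ} {a : ℤ}

theorem left_ne_zero_of_cross (h : cross k v ≠ 0) : k ≠ 0 := by
  rintro rfl; simp [cross] at h

theorem right_ne_zero_of_cross (h : cross k v ≠ 0) : v ≠ 0 := by
  rintro rfl; simp [cross] at h

theorem eq_zero_of_cross_eq_zero (hmn : cross m n ≠ 0) (hm : cross k m = 0)
    (hn : cross k n = 0) : k = 0 := by
  have h := cross_smul_eq_sub m n k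
  rw [cross_comm m k, hm, cross_comm n k, hn, neg_zero, zero_smul, zero_smul, sub_zero] at h
  exact (smul_eq_zero.1 h).resolve_left hmn

theorem cross_eq_zero_of_cross_eq_zero (hj : j ≠ 0) (hq : cross q j = 0) (hw : cross w j = 0) :
    cross q w = 0 := by
  have h := cross_smul_eq_sub q w j
  rw [hq, hw, zero_smul, zero_smul, sub_zero] at h
  exact (smul_eq_zero.1 h).resolve_right hj

theorem normSq_lt_of_lt_abs_cross (h : normSq v < |cross k v|) : normSq v < normSq k := by
  by_contra! hk
  nlinarith [dot_sq_add_cross_sq k v, sq_nonneg (dot k v), sq_abs (cross k v), normSq_nonneg v,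
    normSq_nonneg k]

theorem normSq_lt_normSq_add_smul (hk : k ≠ 0) (ha : a ≠ 0) (h : 0 ≤ a * dot k v) :
    normSq v < normSq (k + a • v) := by
  have hk := normSq_pos hk
  have ha : 1 ≤ a ^ 2 := by nlinarith [Int.one_le_abs ha, sq_abs a]
  rw [normSq_add_smul]
  nlinarith [normSq_nonneg v]

theorem lt_normSq_add {T : ℤ} (h : 2 * T + 2 * normSq v < normSq k) : T < normSq (k + v) := by
  have := normSq_add_le (k + v) (-v)
  rw [add_neg_cancel_right, normSq_neg] at this
  linarith

end Geometry

theorem lt_abs_add_mul {x y t B : ℤ} (hy : y ≠ 0) (h : |x| + B < |t|) : B < |x + t * y| := by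
  have h1 : |t| ≤ |t * y| := by
    rw [abs_mul]; exact le_mul_of_one_le_right (abs_nonneg t) (Int.one_le_abs hy)
  have h2 : |t * y| ≤ |x + t * y| + |x| := by
    simpa using abs_sub (x + t * y) x
  linarith

theorem exists_lt_abs_mul_nonneg (N d : ℤ) : ∃ c : ℤ, N < |c| ∧ 0 ≤ c * d := by
  have hN : N < |N| + 1 := by linarith [le_abs_self N]
  rcases le_total 0 d with hd | hd
  · exact ⟨|N| + 1, by rwa [abs_of_pos (by positivity)], by positivity⟩
  · refine ⟨-(|N| + 1), by rwa [abs_neg, abs_of_pos (by positivity)], ?_⟩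
    nlinarith [abs_nonneg N]

/-- In the recursion of the theorem, `Z (N + 1) = stepSet Z₀ (Z N)`. -/
def stepSet (Z₀ R : Set (ℤ × ℤ)) : Set (ℤ × ℤ) :=
  {p | ∃ j ∈ Z₀, ∃ k ∈ R, cross k j ≠ 0 ∧ normSq k ≠ normSq j ∧ p = k + j}

theorem stepSet_iUnion (Z₀ : Set (ℤ × ℤ)) (Z : ℕ → Set (ℤ × ℤ)) :
    stepSet Z₀ (⋃ N, Z N) = ⋃ N, stepSet Z₀ (Z N) := by
  ext p
  simp only [stepSet, Set.mem_iUnion, Set.mem_ofPred_eq]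
  constructor
  · rintro ⟨j, hj, k, ⟨N, hk⟩, h⟩; exact ⟨N, j, hj, k, hk, h⟩
  · rintro ⟨N, j, hj, k, hk, h⟩; exact ⟨j, hj, k, ⟨N, hk⟩, h⟩

section Reachability

variable {Z₀ R : Set (ℤ × ℤ)} {k v p q u w : ℤ × ℤ}

theorem ne_zero_of_mem_stepSet (hp : p ∈ stepSet Z₀ R) : p ≠ 0 := by
  rintro rfl
  obtain ⟨j, -, k, -, hkj, -, hsum⟩ := hp
  rw [eq_neg_of_add_eq_zero_left hsum.symm, cross_comm, cross_neg_right, neg_neg, cross_self]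
    at hkj
  exact hkj rfl

theorem add_mem_stepSet {j : ℤ × ℤ} (hk : k ∈ R) (hj : j ∈ Z₀) (hkj : cross k j ≠ 0)
    (hQ : normSq k ≠ normSq j) : k + j ∈ stepSet Z₀ R :=
  ⟨j, hj, k, hk, hkj, hQ, rfl⟩

theorem add_natCast_add_one_smul_mem_stepSet (hR : stepSet Z₀ R ⊆ R) (hk : k ∈ R) (hv : v ∈ Z₀)
    (hkv : cross k v ≠ 0) (t : ℕ) (ht : ∀ i : ℕ, i ≤ t → normSq (k + (i : ℤ) • v) ≠ normSq v) :
    k + ((t : ℤ) + 1) • v ∈ stepSet Z₀ R := by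
  induction t with
  | zero => simpa using add_mem_stepSet hk hv hkv (by simpa using ht 0 le_rfl)
  | succ t ih =>
    have hprev := hR (ih fun i hi => ht i (by omega))
    have hnext := add_mem_stepSet hprev hv (by rwa [cross_add_smul_self])
      (by exact_mod_cast ht (t + 1) le_rfl)
    convert hnext using 1
    push_cast
    module

theorem add_natCast_smul_mem (hR : stepSet Z₀ R ⊆ R) (hk : k ∈ R) (hv : v ∈ Z₀)
    (hkv : cross k v ≠ 0) (t : ℕ) (ht : ∀ i : ℕ, i < t → normSq (k + (i : ℤ) • v) ≠ normSq v) :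
    k + (t : ℤ) • v ∈ R := by
  cases t with
  | zero => simpa using hk
  | succ t =>
    exact_mod_cast hR (add_natCast_add_one_smul_mem_stepSet hR hk hv hkv t
      fun i hi => ht i (by omega))

theorem add_smul_mem (hsymm : ∀ k ∈ Z₀, -k ∈ Z₀) (hR : stepSet Z₀ R ⊆ R) (hk : k ∈ R)
    (hv : v ∈ Z₀) (hkv : cross k v ≠ 0) (s : ℤ)
    (hs : ∀ a : ℤ, 0 ≤ a * s → |a| < |s| → normSq (k + a • v) ≠ normSq v) : k + s • v ∈ R := by
  obtain ⟨t, rfl | rfl⟩ := Int.eq_nat_or_neg s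
  · exact add_natCast_smul_mem hR hk hv hkv t fun i hi =>
      hs i (by positivity) (by simpa using hi)
  · have h := add_natCast_smul_mem hR hk (hsymm v hv) (by rwa [cross_neg_right, neg_ne_zero]) t
      fun i hi => by
        simpa [normSq_neg] using hs (-i) (by nlinarith) (by simpa using hi)
    simpa using h

theorem add_smul_mem_of_lt_abs_cross (hsymm : ∀ k ∈ Z₀, -k ∈ Z₀) (hR : stepSet Z₀ R ⊆ R)
    (hk : k ∈ R) (hv : v ∈ Z₀) (h : normSq v < |cross k v|) (s : ℤ) : k + s • v ∈ R := by
  have hkv : cross k v ≠ 0 := by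
    intro h0; rw [h0, abs_zero] at h; linarith [normSq_nonneg v]
  refine add_smul_mem hsymm hR hk hv hkv s fun a _ _ => ?_
  exact (normSq_lt_of_lt_abs_cross (by rwa [cross_add_smul_self])).ne'

theorem add_smul_mem_of_dot (hsymm : ∀ k ∈ Z₀, -k ∈ Z₀) (hR : stepSet Z₀ R ⊆ R) (hk : k ∈ R)
    (hv : v ∈ Z₀) (hkv : cross k v ≠ 0) (hQ : normSq k ≠ normSq v) {s : ℤ}
    (hs : 0 ≤ s * dot k v) : k + s • v ∈ R := by
  refine add_smul_mem hsymm hR hk hv hkv s fun a has has' => ?_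
  rcases eq_or_ne a 0 with rfl | ha
  · simpa using hQ
  · have hs0 : 0 < s ^ 2 := by
      have := abs_pos.1 ((abs_nonneg a).trans_lt has'); positivity
    have had : 0 ≤ a * dot k v :=
      nonneg_of_mul_nonneg_left (by nlinarith [mul_nonneg has hs]) hs0
    exact (normSq_lt_normSq_add_smul (left_ne_zero_of_cross hkv) ha had).ne'

theorem mem_stepSet_of_add_smul_mem (hsymm : ∀ k ∈ Z₀, -k ∈ Z₀) (hR : stepSet Z₀ R ⊆ R)
    (hp : p ≠ 0) (hv : v ∈ Z₀) (hpv : cross p v ≠ 0) {c : ℤ} (hc : c ≠ 0)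
    (hcd : 0 ≤ c * dot p v) (h : p + c • v ∈ R) : p ∈ stepSet Z₀ R := by
  wlog hc0 : 0 < c generalizing c v
  · exact this (hsymm v hv) (by rwa [cross_neg_right, neg_ne_zero]) (neg_ne_zero.2 hc)
      (by rwa [dot_neg_right, neg_mul_neg]) (by rwa [neg_smul_neg]) (by omega)
  have hd : 0 ≤ dot p v := nonneg_of_mul_nonneg_right hcd hc0
  obtain ⟨t, rfl⟩ : ∃ t : ℕ, c = t + 1 := ⟨(c - 1).toNat, by omega⟩
  have hback := add_natCast_add_one_smul_mem_stepSet hR h (hsymm v hv)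
    (by rwa [cross_neg_right, cross_add_smul_self, neg_ne_zero]) t fun i hi => by
      have hpt : p + ((t : ℤ) + 1) • v + (i : ℤ) • -v = p + ((t : ℤ) + 1 - i) • v := by module
      rw [hpt, normSq_neg]
      exact (normSq_lt_normSq_add_smul hp (by omega) (by nlinarith)).ne'
  convert hback using 1
  module

theorem mem_stepSet_of_eq_add_smul_add_smul (hsymm : ∀ k ∈ Z₀, -k ∈ Z₀)
    (hR : stepSet Z₀ R ⊆ R) (hp : p ≠ 0) (hq : q ∈ R) (hu : u ∈ Z₀) (hw : w ∈ Z₀)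
    (huw : cross u w ≠ 0) (hqu : cross q u ≠ 0) (hpw : cross p w ≠ 0) (hQ : normSq u < normSq q)
    {a b : ℤ} (hpq : p = q + a • u + b • w) : p ∈ stepSet Z₀ R := by
  obtain ⟨s, hs, hsd⟩ := exists_lt_abs_mul_nonneg (|cross q w| + normSq w) (dot q u)
  obtain ⟨c, hc, hcd⟩ := exists_lt_abs_mul_nonneg (|b| + |cross q u| + normSq u) (dot p w)
  have hX : q + s • u ∈ R := add_smul_mem_of_dot hsymm hR hq hu hqu hQ.ne' hsd
  have hXw : normSq w < |cross (q + s • u) w| := by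
    rw [cross_add_smul_left]; exact lt_abs_add_mul huw (by linarith)
  have hX' : q + s • u + (b + c) • w ∈ R := add_smul_mem_of_lt_abs_cross hsymm hR hX hw hXw _
  have hX'u : normSq u < |cross (q + s • u + (b + c) • w) u| := by
    rw [cross_add_smul_left, cross_add_smul_self, cross_comm w u]
    refine lt_abs_add_mul (neg_ne_zero.2 huw) ?_
    have := abs_add_le (b + c) (-b)
    rw [add_neg_cancel_comm, abs_neg] at this
    linarith
  have hY := add_smul_mem_of_lt_abs_cross hsymm hR hX' hu hX'u (a - s)
  have hYp : q + s • u + (b + c) • w + (a - s) • u = p + c • w := by rw [hpq]; module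
  have hc0 : c ≠ 0 := by
    rintro rfl
    rw [abs_zero] at hc
    linarith [abs_nonneg b, abs_nonneg (cross q u), normSq_nonneg u]
  rw [hYp] at hY
  exact mem_stepSet_of_add_smul_mem hsymm hR hp hw hpw hc0 hcd hY

def UnboundedInCoset (R : Set (ℤ × ℤ)) (L : AddSubgroup (ℤ × ℤ)) (c : ℤ × ℤ) : Prop :=
  ∀ T : ℤ, ∃ q ∈ R, q - c ∈ L ∧ T < normSq q

theorem unboundedInCoset_closure_pair_zero (hsymm : ∀ k ∈ Z₀, -k ∈ Z₀) (hR : stepSet Z₀ R ⊆ R)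
    {m n : ℤ × ℤ} (hm : m ∈ R) (hn : n ∈ Z₀) (hmn : cross m n ≠ 0)
    (hnorm : normSq m ≠ normSq n) : UnboundedInCoset R (AddSubgroup.closure {m, n}) 0 := by
  intro T
  obtain ⟨s, hs, hsd⟩ := exists_lt_abs_mul_nonneg T (dot m n)
  refine ⟨m + s • n, add_smul_mem_of_dot hsymm hR hm hn hmn hnorm hsd, ?_, ?_⟩
  · rw [sub_zero]
    exact add_mem (AddSubgroup.subset_closure (by simp))
      (zsmul_mem (AddSubgroup.subset_closure (by simp)) s)
  · have hn1 : 1 ≤ normSq n := normSq_pos (right_ne_zero_of_cross hmn)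
    have h1 : |s| ≤ s ^ 2 := by simpa [sq_abs] using Int.le_self_sq |s|
    have h2 : s ^ 2 ≤ s ^ 2 * normSq n := le_mul_of_one_le_right (sq_nonneg s) hn1
    rw [normSq_add_smul]
    nlinarith [normSq_nonneg m]

theorem UnboundedInCoset.add (hR : stepSet Z₀ R ⊆ R) {L : AddSubgroup (ℤ × ℤ)} {m n c j : ℤ × ℤ}
    (hm : m ∈ Z₀) (hn : n ∈ Z₀) (hmL : m ∈ L) (hnL : n ∈ L) (hmn : cross m n ≠ 0)
    (hc : UnboundedInCoset R L c) (hj : j ∈ Z₀) : UnboundedInCoset R L (j + c) := by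
  rcases eq_or_ne j 0 with rfl | hj0
  · simpa using hc
  intro T
  set W := normSq m + normSq n + normSq j
  have hQm := normSq_nonneg m
  have hQn := normSq_nonneg n
  have hQj := normSq_nonneg j
  obtain ⟨q, hqR, hqL, hq⟩ := hc (2 * max T 0 + 4 * W)
  have hT := le_max_left T 0
  have hT0 := le_max_right T 0
  have hq0 : q ≠ 0 := by rintro rfl; rw [normSq_zero] at hq; linarith
  by_cases hqj : cross q j = 0
  · obtain ⟨w, hwZ, hwL, hwW, hqw⟩ :
        ∃ w ∈ Z₀, w ∈ L ∧ normSq w + normSq j ≤ W ∧ cross q w ≠ 0 := by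
      by_cases hqm : cross q m = 0
      · exact ⟨n, hn, hnL, by linarith, fun hqn => hq0 (eq_zero_of_cross_eq_zero hmn hqm hqn)⟩
      · exact ⟨m, hm, hmL, by linarith, hqm⟩
    have hwj : cross w j ≠ 0 := fun h => hqw (cross_eq_zero_of_cross_eq_zero hj0 hqj h)
    have hQw := normSq_nonneg w
    have hqw' : q + w ∈ R :=
      hR (add_mem_stepSet hqR hwZ hqw (show normSq w < normSq q by linarith).ne')
    have hfar : normSq j < normSq (q + w) := lt_normSq_add (by linarith)
    refine ⟨q + w + j, hR (add_mem_stepSet hqw' hj ?_ hfar.ne'), ?_, ?_⟩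
    · rwa [cross_add_left, hqj, zero_add]
    · rw [show q + w + j - (j + c) = q - c + w by abel]
      exact add_mem hqL hwL
    · rw [add_assoc]
      exact lt_normSq_add (by linarith [normSq_add_le w j])
  · refine ⟨q + j, hR (add_mem_stepSet hqR hj hqj (show normSq j < normSq q by linarith).ne'),
      ?_, ?_⟩
    · rwa [show q + j - (j + c) = q - c by abel]
    · exact lt_normSq_add (by linarith)

theorem mem_stepSet_of_cross_ne_zero (hsymm : ∀ k ∈ Z₀, -k ∈ Z₀) (hR : stepSet Z₀ R ⊆ R)
    {m n : ℤ × ℤ} (hm : m ∈ Z₀) (hn : n ∈ Z₀) (hmn : cross m n ≠ 0)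
    (hp : UnboundedInCoset R (AddSubgroup.closure {m, n}) p) (hpm : cross p m ≠ 0)
    (hpn : cross p n ≠ 0) : p ∈ stepSet Z₀ R := by
  obtain ⟨q, hqR, hqL, hq⟩ := hp (normSq m + normSq n)
  obtain ⟨a, b, hab⟩ := AddSubgroup.mem_closure_pair.1 (neg_mem hqL)
  have hpq : p = q + (a • m + b • n) := by rw [hab]; abel
  have hQm := normSq_nonneg m
  have hQn := normSq_nonneg n
  by_cases hqm : cross q m = 0
  · have hq0 : q ≠ 0 := by rintro rfl; rw [normSq_zero] at hq; linarith
    have hqn : cross q n ≠ 0 := fun hqn => hq0 (eq_zero_of_cross_eq_zero hmn hqm hqn)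
    exact mem_stepSet_of_eq_add_smul_add_smul hsymm hR (left_ne_zero_of_cross hpm) hqR hn hm
      (by rwa [cross_comm, neg_ne_zero]) hqn hpm (by linarith) (by rw [hpq]; abel)
  · exact mem_stepSet_of_eq_add_smul_add_smul hsymm hR (left_ne_zero_of_cross hpm) hqR hm hn hmn
      hqm hpn (by linarith) (by rw [hpq]; abel)

theorem mem_stepSet_of_cross_eq_zero (hsymm : ∀ k ∈ Z₀, -k ∈ Z₀) {u : ℤ × ℤ} (hp : p ≠ 0)
    (hv : v ∈ Z₀) (hpu : cross p u = 0) (huv : cross u v ≠ 0)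
    (hgood : ∀ k, cross k u ≠ 0 → cross k v ≠ 0 → k ∈ R) : p ∈ stepSet Z₀ R := by
  have hpv : cross p v ≠ 0 := fun hpv => hp (eq_zero_of_cross_eq_zero huv hpu hpv)
  have hstep : ∀ v' ∈ Z₀, cross v' u ≠ 0 → cross v' v = 0 → cross p v' ≠ 0 →
      normSq (p - v') ≠ normSq v' → p ∈ stepSet Z₀ R := by
    intro v' hv' hv'u hv'v hpv' hQ
    have hk : p - v' ∈ R := hgood _ (by rwa [cross_sub_left, hpu, zero_sub, neg_ne_zero])
      (by rwa [cross_sub_left, hv'v, sub_zero])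
    simpa using add_mem_stepSet hk hv' (by rwa [cross_sub_left, cross_self, sub_zero]) hQ
  by_cases hQ : normSq (p - v) = normSq v
  · refine hstep (-v) (hsymm v hv) ?_ ?_ ?_ ?_
    · rwa [cross_neg_left, cross_comm, neg_neg]
    · rw [cross_neg_left, cross_self, neg_zero]
    · rwa [cross_neg_right, neg_ne_zero]
    · have := normSq_add_add_normSq_sub p v
      have := normSq_pos hp
      rw [sub_neg_eq_add, normSq_neg]
      omega
  · exact hstep v hv (by rwa [cross_comm, neg_ne_zero]) (cross_self v) hpv hQ

theorem mem_stepSet_of_ne_zero (hsymm : ∀ k ∈ Z₀, -k ∈ Z₀) (hgen : AddSubgroup.closure Z₀ = ⊤)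
    {m n : ℤ × ℤ} (hm : m ∈ Z₀) (hn : n ∈ Z₀) (hmn : cross m n ≠ 0)
    (hnorm : normSq m ≠ normSq n) (hZ₀R : Z₀ ⊆ R) (hR : stepSet Z₀ R ⊆ R) (hp : p ≠ 0) :
    p ∈ stepSet Z₀ R := by
  have hmL : m ∈ AddSubgroup.closure {m, n} := AddSubgroup.subset_closure (by simp)
  have hnL : n ∈ AddSubgroup.closure {m, n} := AddSubgroup.subset_closure (by simp)
  have hfar : ∀ c, UnboundedInCoset R (AddSubgroup.closure {m, n}) c := fun c =>
    AddSubgroup.closure_induction_left (p := fun c _ => UnboundedInCoset R _ c)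
      (unboundedInCoset_closure_pair_zero hsymm hR (hZ₀R hm) hn hmn hnorm)
      (fun j hj _ _ hc => hc.add hR hm hn hmL hnL hmn hj)
      (fun j hj _ _ hc => hc.add hR hm hn hmL hnL hmn (hsymm j hj))
      (hgen ▸ AddSubgroup.mem_top c)
  have hgood : ∀ k, cross k m ≠ 0 → cross k n ≠ 0 → k ∈ R := fun k hkm hkn =>
    hR (mem_stepSet_of_cross_ne_zero hsymm hR hm hn hmn (hfar k) hkm hkn)
  by_cases hpm : cross p m = 0
  · exact mem_stepSet_of_cross_eq_zero hsymm hp hn hpm hmn hgood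
  by_cases hpn : cross p n = 0
  · exact mem_stepSet_of_cross_eq_zero hsymm hp hm hpn (by rwa [cross_comm, neg_ne_zero])
      fun k hkn hkm => hgood k hkm hkn
  exact mem_stepSet_of_cross_ne_zero hsymm hR hm hn hmn (hfar p) hpm hpn

end Reachability

end LatticePropagation

open LatticePropagation in
theorem lattice_propagation_general (Z₀ : Set (ℤ × ℤ))
    (hsymm : ∀ k ∈ Z₀, -k ∈ Z₀)
    (hgen : AddSubgroup.closure Z₀ = ⊤)
    (m n : ℤ × ℤ) (hm : m ∈ Z₀) (hn : n ∈ Z₀)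
    (hpar : m.1 * n.2 - m.2 * n.1 ≠ 0)
    (hnorm : m.1 ^ 2 + m.2 ^ 2 ≠ n.1 ^ 2 + n.2 ^ 2)
    (Z : ℕ → Set (ℤ × ℤ)) (hZ0 : Z 0 = Z₀)
    (hrec : ∀ N : ℕ, Z (N + 1) =
      {p | ∃ j ∈ Z₀, ∃ k ∈ Z N,
        k.2 * j.1 - k.1 * j.2 ≠ 0 ∧ k.1 ^ 2 + k.2 ^ 2 ≠ j.1 ^ 2 + j.2 ^ 2 ∧ p = k + j}) :
    (⋃ N : ℕ, Z (N + 1)) = {p : ℤ × ℤ | p ≠ (0, 0)} := by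
  have hstep : ⋃ N, Z (N + 1) = stepSet Z₀ (⋃ N, Z N) := by
    rw [stepSet_iUnion]; exact Set.iUnion_congr hrec
  have hmn : cross m n ≠ 0 := by
    unfold cross; contrapose! hpar; linarith
  have hclosed : stepSet Z₀ (⋃ N, Z N) ⊆ ⋃ N, Z N :=
    hstep ▸ Set.iUnion_subset fun N => Set.subset_iUnion Z (N + 1)
  rw [hstep]
  exact Set.Subset.antisymm (fun p hp => ne_zero_of_mem_stepSet hp) fun p hp =>
    mem_stepSet_of_ne_zero hsymm hgen hm hn hmn hnorm (hZ0 ▸ Set.subset_iUnion Z 0) hclosed hp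

/-- Combinatorial propagation (Proposition 4.4 of Hairer–Mattingly 2006): if
`Z₀ ⊂ ℤ²∖{0}` is a finite symmetric generator of `ℤ²` containing two non-parallel vectors
`m, n` with `|m| ≠ |n|`, and `Z_{k+1} = {k + j : j ∈ Z₀, k ∈ Z_k, ⟨k^⊥, j⟩ ≠ 0, |k| ≠ |j|}`,
then `⋃_{k ≥ 1} Z_k = ℤ²∖{0}`. -/
theorem lattice_propagation (Z₀ : Set (ℤ × ℤ)) (hfin : Z₀.Finite)
    (h0 : (0, 0) ∉ Z₀) (hsymm : ∀ k ∈ Z₀, -k ∈ Z₀)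
    (hgen : AddSubgroup.closure Z₀ = ⊤)
    (m n : ℤ × ℤ) (hm : m ∈ Z₀) (hn : n ∈ Z₀)
    (hpar : m.1 * n.2 - m.2 * n.1 ≠ 0)
    (hnorm : m.1 ^ 2 + m.2 ^ 2 ≠ n.1 ^ 2 + n.2 ^ 2)
    (Z : ℕ → Set (ℤ × ℤ)) (hZ0 : Z 0 = Z₀)
    (hrec : ∀ N : ℕ, Z (N + 1) =
      {p | ∃ j ∈ Z₀, ∃ k ∈ Z N,
        k.2 * j.1 - k.1 * j.2 ≠ 0 ∧ k.1 ^ 2 + k.2 ^ 2 ≠ j.1 ^ 2 + j.2 ^ 2 ∧ p = k + j}) :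
    (⋃ N : ℕ, Z (N + 1)) = {p : ℤ × ℤ | p ≠ (0, 0)} :=
  lattice_propagation_general Z₀ hsymm hgen m n hm hn hpar hnorm Z hZ0 hrec
end
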